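/- The [[10,1,2]] code obtained by morphing the 15-qubit Reed-Muller code has distance exactly 2, encodes one logical qubit on 10 physical qubits, and for each of the seven nontrivial Z^b errors on the three edge qubits there is exactly one way to extend it by a single Z on one of the seven simplex qubits to form a logical Z operator. -/

import Mathlib

/-!
The `[[10,1,2]]` code obtained by morphing the 15-qubit Reed–Muller code:
7 simplex qubits labelled by nonzero `w ∈ F₂³` and 3 edge qubits `1̄,2̄,3̄`.
X-stabilizer generators (for `i ∈ Fin 3`): `X` on `{w : w_i = 1} ∪ {ī}`
(weight 5, e.g. `X₁X₂X₄X₅X_{1̄}`).  Z-stabilizer generators: for each nonempty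
`S ⊆ Fin 3` with `|S| ≤ 2`: `Z` on `{w : w_S = 1}`, plus the edge qubit `k̄`
(`{k}` the complement of `S`) when `|S| = 2` (e.g. `Z₁Z₂Z₄Z₅` and `Z₄Z₅Z_{2̄}`).
The logical X is supported on the 7 simplex qubits.
-/

abbrev Simp3 := {w : Fin 3 → ZMod 2 // w ≠ 0}

abbrev Q10 := Simp3 ⊕ Fin 3

def xCheck (i : Fin 3) : Q10 → ZMod 2
  | .inl w => if w.1 i = 1 then 1 else 0
  | .inr j => if j = i then 1 else 0

def zGen (S : Finset (Fin 3)) : Q10 → ZMod 2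
  | .inl w => if ∀ i ∈ S, w.1 i = 1 then 1 else 0
  | .inr j => if S.card = 2 ∧ j ∉ S then 1 else 0

def xMat : Matrix (Fin 3) Q10 (ZMod 2) := fun i => xCheck i

def zMat : Matrix {S : Finset (Fin 3) // S.Nonempty ∧ S.card ≤ 2} Q10 (ZMod 2) :=
  fun S => zGen S.1

def zSpan : Submodule (ZMod 2) (Q10 → ZMod 2) :=
  Submodule.span (ZMod 2) (Set.range fun S => zMat S)

def xSpan : Submodule (ZMod 2) (Q10 → ZMod 2) :=
  Submodule.span (ZMod 2) (Set.range fun i => xMat i)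

/-- Commuting with all stabilizers. -/
def inCent (a b : Q10 → ZMod 2) : Prop :=
  zMat.mulVec a = 0 ∧ xMat.mulVec b = 0

/-- Membership in the stabilizer group. -/
def inStab (a b : Q10 → ZMod 2) : Prop := a ∈ xSpan ∧ b ∈ zSpan

def wt10 (a b : Q10 → ZMod 2) : ℕ :=
  (Finset.univ.filter fun q => a q ≠ 0 ∨ b q ≠ 0).card

/-- A Z-type Pauli is a logical Z operator: it commutes with all X-stabilizers
and anticommutes with the logical X (supported on the seven simplex qubits). -/
def isLogicalZ (b : Q10 → ZMod 2) : Prop :=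
  (∀ i : Fin 3, (∑ q, xCheck i q * b q) = 0) ∧
  (∑ w : Simp3, b (.inl w)) = 1

/-- `Z^b` on the edge qubits together with a single `Z` on simplex qubit `w`. -/
def edgePlusSimplex (b : Fin 3 → ZMod 2) (w : Simp3) : Q10 → ZMod 2
  | .inl w' => if w' = w then 1 else 0
  | .inr j => b j

/-!
Both check matrices have right inverses made of single-qubit operators, so their ranks are
3 and 6 and the stabilizer group has rank 9 = 10 - 1. Every qubit lies in the support of
some X-generator and some Z-generator, so a weight-one Pauli that commutes with all
stabilizers is the identity; hence the distance is at least 2. On `Z^b` extended by `Z_w`,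
X-check `i` measures `w_i + b_i` while the logical X measures 1, so the extension is a
logical Z exactly when `w = b`; for `b = e₁` this is a weight-two logical operator.
-/

theorem Matrix.rank_eq_card_height_of_mul_eq_one {R m n : Type*} [Fintype m] [Fintype n]
    [DecidableEq m] [CommSemiring R] [StrongRankCondition R]
    {A : Matrix m n R} {B : Matrix n m R} (h : A * B = 1) : A.rank = Fintype.card m :=
  le_antisymm A.rank_le_card_height (by simpa [h] using A.rank_mul_le_left B)

open Matrix in
theorem Matrix.eq_zero_of_mulVec_eq_zero_of_forall_ne_eq_zero {R m n : Type*}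
    [Fintype n] [DecidableEq n] [Semiring R] [NoZeroDivisors R] {M : Matrix m n R}
    {q : n} (hM : ∃ i, M i q ≠ 0) {v : n → R} (hv : M *ᵥ v = 0)
    (hq : ∀ p ≠ q, v p = 0) : v = 0 := by
  have hv_single : v = Pi.single q (v q) := by
    funext p
    by_cases hp : p = q
    · subst hp; simp
    · simp [hq p hp, hp]
  obtain ⟨i, hi⟩ := hM
  rw [hv_single] at hv
  have hrow : M i q = 0 ∨ v q = 0 := by simpa using congrFun hv i
  rw [hv_single, hrow.resolve_left hi, Pi.single_zero]

def xRightInv : Matrix Q10 (Fin 3) (ZMod 2) :=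
  Matrix.of fun q i => if q = .inr i then 1 else 0

/-- Column `S` is `Z` on the simplex qubit with support `S` if `|S| = 1`, and on the edge qubit
outside `S` if `|S| = 2`: among the Z-generators only `zGen S` meets it. -/
def zRightInv : Matrix Q10 {S : Finset (Fin 3) // S.Nonempty ∧ S.card ≤ 2} (ZMod 2) :=
  Matrix.of fun q S => match q with
    | .inl w => if S.1.card = 1 ∧ ∀ i, w.1 i = 1 ↔ i ∈ S.1 then 1 else 0
    | .inr j => if S.1.card = 2 ∧ j ∉ S.1 then 1 else 0

theorem xMat_mul_xRightInv : xMat * xRightInv = 1 := by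
  ext i j; simp only [Matrix.mul_apply, Matrix.one_apply]; revert i j; decide

theorem zMat_mul_zRightInv : zMat * zRightInv = 1 := by
  ext i j; simp only [Matrix.mul_apply, Matrix.one_apply]; revert i j; decide

theorem xMat_rank : xMat.rank = 3 := by
  simpa using Matrix.rank_eq_card_height_of_mul_eq_one xMat_mul_xRightInv

theorem zMat_rank : zMat.rank = 6 := by
  rw [Matrix.rank_eq_card_height_of_mul_eq_one zMat_mul_zRightInv]; decide

theorem exists_xMat_ne_zero : ∀ q, ∃ i, xMat i q ≠ 0 := by decide

theorem exists_zMat_ne_zero : ∀ q, ∃ S, zMat S q ≠ 0 := by decide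

theorem exists_forall_ne_eq_zero_of_wt10_le_one {a b : Q10 → ZMod 2} (h : wt10 a b ≤ 1) :
    ∃ q, ∀ p ≠ q, a p = 0 ∧ b p = 0 := by
  obtain ⟨q, hq⟩ := Finset.card_le_one_iff_subset_singleton.mp h
  refine ⟨q, fun p hp => ?_⟩
  by_contra hne
  have hmem : p ∈ Finset.univ.filter fun q => a q ≠ 0 ∨ b q ≠ 0 := by
    simp only [Finset.mem_filter, Finset.mem_univ, true_and]
    tauto
  exact hp (Finset.mem_singleton.mp (hq hmem))

theorem two_le_wt10 {a b : Q10 → ZMod 2} (hc : inCent a b) (hs : ¬ inStab a b) :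
    2 ≤ wt10 a b := by
  by_contra! hlt
  obtain ⟨q, hq⟩ := exists_forall_ne_eq_zero_of_wt10_le_one (Nat.lt_succ_iff.mp hlt)
  have ha := Matrix.eq_zero_of_mulVec_eq_zero_of_forall_ne_eq_zero
    (exists_zMat_ne_zero q) hc.1 fun p hp => (hq p hp).1
  have hb := Matrix.eq_zero_of_mulVec_eq_zero_of_forall_ne_eq_zero
    (exists_xMat_ne_zero q) hc.2 fun p hp => (hq p hp).2
  subst ha hb
  exact hs ⟨zero_mem _, zero_mem _⟩

/-- The stabilizers commute with the logical X, which acts on all simplex qubits. -/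
theorem sum_simplex_eq_zero_of_mem_zSpan {v : Q10 → ZMod 2} (hv : v ∈ zSpan) :
    ∑ w : Simp3, v (.inl w) = 0 := by
  induction hv using Submodule.span_induction with
  | mem _ h => obtain ⟨S, rfl⟩ := h; revert S; decide
  | zero => simp
  | add _ _ _ _ hx hy => simp [Finset.sum_add_distrib, hx, hy]
  | smul c _ _ hx => simp [← Finset.mul_sum, hx]

theorem inCent_of_isLogicalZ {b : Q10 → ZMod 2} (h : isLogicalZ b) : inCent 0 b :=
  ⟨Matrix.mulVec_zero _, funext h.1⟩

theorem not_inStab_of_isLogicalZ {b : Q10 → ZMod 2} (h : isLogicalZ b) : ¬ inStab 0 b :=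
  fun hs => by simpa [h.2] using sum_simplex_eq_zero_of_mem_zSpan hs.2

theorem xCheck_syndrome_edgePlusSimplex (b : Fin 3 → ZMod 2) (w : Simp3) (i : Fin 3) :
    ∑ q, xCheck i q * edgePlusSimplex b w q = (if w.1 i = 1 then 1 else 0) + b i := by
  simp [Fintype.sum_sum_type, xCheck, edgePlusSimplex]

theorem isLogicalZ_edgePlusSimplex_iff {b : Fin 3 → ZMod 2} {w : Simp3} :
    isLogicalZ (edgePlusSimplex b w) ↔ w.1 = b := by
  have hbit : ∀ x y : ZMod 2, (if x = 1 then 1 else 0) + y = 0 ↔ x = y := by decide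
  have hlogicalX : ∑ w' : Simp3, edgePlusSimplex b w (.inl w') = 1 := by simp [edgePlusSimplex]
  simp only [isLogicalZ, xCheck_syndrome_edgePlusSimplex, hbit, hlogicalX, and_true, funext_iff]

theorem existsUnique_isLogicalZ_edgePlusSimplex {b : Fin 3 → ZMod 2} (hb : b ≠ 0) :
    ∃! w : Simp3, isLogicalZ (edgePlusSimplex b w) :=
  ⟨⟨b, hb⟩, isLogicalZ_edgePlusSimplex_iff.2 rfl,
    fun _ hw => Subtype.ext (isLogicalZ_edgePlusSimplex_iff.1 hw)⟩

/-- The `[[10,1,2]]` code obtained by morphing the 15-qubit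
Reed–Muller code has 10 physical qubits, encodes one logical qubit
(its stabilizer group has rank `9 = 10 − 1`), has distance exactly 2, and for
each of the seven nontrivial `Z^b` errors on the three edge qubits there is
exactly one way to extend it by a single `Z` on one of the seven simplex qubits
to form a logical Z operator. -/
theorem ten_one_two_code_properties :
    Fintype.card Q10 = 10 ∧
    xMat.rank + zMat.rank = 9 ∧
    ((∀ a b, inCent a b → ¬ inStab a b → 2 ≤ wt10 a b) ∧
      (∃ a b, inCent a b ∧ ¬ inStab a b ∧ wt10 a b = 2)) ∧
    (∀ b : Fin 3 → ZMod 2, b ≠ 0 →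
      ∃! w : Simp3, isLogicalZ (edgePlusSimplex b w)) := by
  have hlogical : isLogicalZ (edgePlusSimplex (Pi.single 0 1) ⟨Pi.single 0 1, by decide⟩) :=
    isLogicalZ_edgePlusSimplex_iff.2 rfl
  refine ⟨by decide, by rw [xMat_rank, zMat_rank], ⟨fun _ _ => two_le_wt10, ?_⟩,
    fun _ => existsUnique_isLogicalZ_edgePlusSimplex⟩
  exact ⟨0, _, inCent_of_isLogicalZ hlogical, not_inStab_of_isLogicalZ hlogical, by decide⟩
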